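/- arXiv:1112.2352 — 6 statements merged into one kernel-verified Lean document; each statement's English description precedes it below -/
import Mathlib

section
/- Let ψ ∈ X_U and set G_ψ(u) = u − ψ(u). Then G_ψ is a strictly increasing C¹ bijection from (0,∞) onto ℝ, and the rotated curve ψ̌(v) := (G_ψ^{-1}(√2 v) + ψ(G_ψ^{-1}(√2 v)))/√2 satisfies, for every v ∈ ℝ: (i) ψ̌ is differentiable with ψ̌'(v) = 1 − 2·Φ_U(ψ)(√2 v), and (ii) ψ̌(v) = √2 ∫_{√2 v}^{∞} Φ_U(ψ)(w) dw + v (in particular the integral is finite). -/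
/-!
Since `ψ' < 0`, `G_ψ' = 1 - ψ' > 1`, so `G_ψ` is strictly increasing, and the limits of `ψ` at
`0⁺` and `∞` send `G_ψ` to `-∞` and `+∞`, so it is onto `ℝ` by the intermediate value theorem.
By the inverse function theorem `w ↦ ψ (G_ψ⁻¹ w)` has derivative `ψ' / (1 - ψ') = -Φ_U(ψ)(w)`
and tends to `0` at `∞`, hence `∫_a^∞ Φ_U(ψ) = ψ (G_ψ⁻¹ a)`. Both claims about the rotated
curve then follow from the identity `ψ̌ v = v + √2 ψ (G_ψ⁻¹ (√2 v))`, which is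
`G_ψ⁻¹ x - ψ (G_ψ⁻¹ x) = x` at `x = √2 v`.
-/

open Real MeasureTheory Set Filter

/-- `G_ψ(u) = u - ψ(u)`. -/
noncomputable def Gpsi (ψ : ℝ → ℝ) (u : ℝ) : ℝ := u - ψ u

/-- The inverse of `G_ψ` on `(0,∞)`. -/
noncomputable def Ginv (ψ : ℝ → ℝ) (v : ℝ) : ℝ := Function.invFunOn (Gpsi ψ) (Set.Ioi 0) v

/-- `Φ_U(ψ)(v) = -ψ'(G_ψ⁻¹(v)) / (1 - ψ'(G_ψ⁻¹(v)))`. -/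
noncomputable def PhiU (ψ : ℝ → ℝ) (v : ℝ) : ℝ :=
  -deriv ψ (Ginv ψ v) / (1 - deriv ψ (Ginv ψ v))

/-- The rotated curve `ψ̌(v) = (G_ψ⁻¹(√2 v) + ψ(G_ψ⁻¹(√2 v)))/√2`. -/
noncomputable def checkPsi (ψ : ℝ → ℝ) (v : ℝ) : ℝ :=
  (Ginv ψ (Real.sqrt 2 * v) + ψ (Ginv ψ (Real.sqrt 2 * v))) / Real.sqrt 2

open Topology Function

section InverseOfStrictMonoOn

variable {f : ℝ → ℝ} {s : Set ℝ}

theorem StrictMonoOn.monotone_invFunOn (hf : StrictMonoOn f s) (hs : SurjOn f s univ) :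
    Monotone (invFunOn f s) := fun v w hvw =>
  (hf.le_iff_le (hs.mapsTo_invFunOn (mem_univ v)) (hs.mapsTo_invFunOn (mem_univ w))).1 <| by
    rwa [hs.rightInvOn_invFunOn (mem_univ v), hs.rightInvOn_invFunOn (mem_univ w)]

theorem StrictMonoOn.continuous_invFunOn (hf : StrictMonoOn f s) (hs : SurjOn f s univ)
    (ho : IsOpen s) : Continuous (invFunOn f s) :=
  continuous_iff_continuousAt.2 fun v =>
    continuousAt_of_monotoneOn_of_image_mem_nhds ((hf.monotone_invFunOn hs).monotoneOn _)
      univ_mem <| mem_of_superset (ho.mem_nhds (hs.mapsTo_invFunOn (mem_univ v))) fun x hx =>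
        ⟨f x, mem_univ _, hf.injOn.leftInvOn_invFunOn hx⟩

theorem StrictMonoOn.tendsto_invFunOn_atTop (hf : StrictMonoOn f s) (hs : SurjOn f s univ)
    (hbdd : ¬BddAbove s) : Tendsto (invFunOn f s) atTop atTop :=
  tendsto_atTop_atTop_of_monotone (hf.monotone_invFunOn hs) fun b => by
    obtain ⟨x, hx, hbx⟩ := not_bddAbove_iff.1 hbdd b
    exact ⟨f x, (hf.injOn.leftInvOn_invFunOn hx).symm ▸ hbx.le⟩

theorem StrictMonoOn.hasDerivAt_invFunOn (hf : StrictMonoOn f s) (hs : SurjOn f s univ)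
    (ho : IsOpen s) {f' v : ℝ} (hder : HasDerivAt f f' (invFunOn f s v)) (hf' : f' ≠ 0) :
    HasDerivAt (invFunOn f s) f'⁻¹ v :=
  hder.of_local_left_inverse (hf.continuous_invFunOn hs ho).continuousAt hf' <|
    .of_forall fun w => hs.rightInvOn_invFunOn (mem_univ w)

end InverseOfStrictMonoOn

section RotatedCurve

variable {ψ : ℝ → ℝ}

theorem hasDerivAt_Gpsi {u : ℝ} (h : DifferentiableAt ℝ ψ u) :
    HasDerivAt (Gpsi ψ) (1 - deriv ψ u) u :=
  (hasDerivAt_id u).sub h.hasDerivAt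

theorem strictMonoOn_Gpsi (hd : DifferentiableOn ℝ ψ (Ioi 0))
    (hneg : ∀ u ∈ Ioi (0 : ℝ), deriv ψ u < 0) : StrictMonoOn (Gpsi ψ) (Ioi 0) :=
  strictMonoOn_of_deriv_pos (convex_Ioi 0) (continuousOn_id.sub hd.continuousOn) fun u hu => by
    rw [interior_Ioi] at hu
    rw [(hasDerivAt_Gpsi (hd.differentiableAt (isOpen_Ioi.mem_nhds hu))).deriv]
    linarith [hneg u hu]

theorem surjOn_Gpsi (hc : ContinuousOn ψ (Ioi 0)) (h0 : Tendsto ψ (𝓝[>] 0) atTop)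
    (hinf : Tendsto ψ atTop (𝓝 0)) : SurjOn (Gpsi ψ) (Ioi 0) univ := by
  refine (continuousOn_id.sub hc).surjOn_of_tendsto nonempty_Ioi ?_ ?_
  · rw [tendsto_comp_coe_Ioi_atBot]
    exact (tendsto_nhdsWithin_of_tendsto_nhds tendsto_id).add_atBot
      (tendsto_neg_atTop_atBot.comp h0)
  · rw [tendsto_comp_val_Ioi_atTop]
    exact (tendsto_id.atTop_add hinf.neg).congr fun u => (sub_eq_add_neg u (ψ u)).symm

theorem Ginv_mem (hs : SurjOn (Gpsi ψ) (Ioi 0) univ) (v : ℝ) : Ginv ψ v ∈ Ioi 0 :=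
  hs.mapsTo_invFunOn (mem_univ v)

theorem Gpsi_Ginv (hs : SurjOn (Gpsi ψ) (Ioi 0) univ) (v : ℝ) : Gpsi ψ (Ginv ψ v) = v :=
  hs.rightInvOn_invFunOn (mem_univ v)

theorem PhiU_nonneg (hneg : ∀ u ∈ Ioi (0 : ℝ), deriv ψ u ≤ 0)
    (hs : SurjOn (Gpsi ψ) (Ioi 0) univ) (w : ℝ) : 0 ≤ PhiU ψ w := by
  have hψ' := hneg _ (Ginv_mem hs w)
  exact div_nonneg (by linarith) (by linarith)

theorem hasDerivAt_Ginv (hd : DifferentiableOn ℝ ψ (Ioi 0))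
    (hneg : ∀ u ∈ Ioi (0 : ℝ), deriv ψ u < 0) (hs : SurjOn (Gpsi ψ) (Ioi 0) univ) (v : ℝ) :
    HasDerivAt (Ginv ψ) (1 - deriv ψ (Ginv ψ v))⁻¹ v := by
  have hu := Ginv_mem hs v
  refine (strictMonoOn_Gpsi hd hneg).hasDerivAt_invFunOn hs isOpen_Ioi
    (hasDerivAt_Gpsi (hd.differentiableAt (isOpen_Ioi.mem_nhds hu))) ?_
  linarith [hneg _ hu]

theorem hasDerivAt_comp_Ginv (hd : DifferentiableOn ℝ ψ (Ioi 0))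
    (hneg : ∀ u ∈ Ioi (0 : ℝ), deriv ψ u < 0) (hs : SurjOn (Gpsi ψ) (Ioi 0) univ) (w : ℝ) :
    HasDerivAt (fun w => ψ (Ginv ψ w)) (-PhiU ψ w) w := by
  have hu := Ginv_mem hs w
  have hψ := (hd.differentiableAt (isOpen_Ioi.mem_nhds hu)).hasDerivAt
  refine (hψ.comp w (hasDerivAt_Ginv hd hneg hs w)).congr_deriv ?_
  have : 1 - deriv ψ (Ginv ψ w) ≠ 0 := by linarith [hneg _ hu]
  rw [PhiU]
  field_simp

theorem tendsto_comp_Ginv_atTop (hd : DifferentiableOn ℝ ψ (Ioi 0))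
    (hneg : ∀ u ∈ Ioi (0 : ℝ), deriv ψ u < 0) (hs : SurjOn (Gpsi ψ) (Ioi 0) univ)
    (hinf : Tendsto ψ atTop (𝓝 0)) : Tendsto (fun w => ψ (Ginv ψ w)) atTop (𝓝 0) :=
  hinf.comp <| (strictMonoOn_Gpsi hd hneg).tendsto_invFunOn_atTop hs (not_bddAbove_Ioi 0)

theorem integrableOn_Ioi_PhiU (hd : DifferentiableOn ℝ ψ (Ioi 0))
    (hneg : ∀ u ∈ Ioi (0 : ℝ), deriv ψ u < 0) (hs : SurjOn (Gpsi ψ) (Ioi 0) univ)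
    (hinf : Tendsto ψ atTop (𝓝 0)) (a : ℝ) : IntegrableOn (PhiU ψ) (Ioi a) :=
  integrableOn_Ioi_deriv_of_nonneg'
    (fun w _ => (hasDerivAt_comp_Ginv hd hneg hs w).neg.congr_deriv (neg_neg _))
    (fun w _ => PhiU_nonneg (fun u hu => (hneg u hu).le) hs w)
    (tendsto_comp_Ginv_atTop hd hneg hs hinf).neg

theorem integral_Ioi_PhiU (hd : DifferentiableOn ℝ ψ (Ioi 0))
    (hneg : ∀ u ∈ Ioi (0 : ℝ), deriv ψ u < 0) (hs : SurjOn (Gpsi ψ) (Ioi 0) univ)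
    (hinf : Tendsto ψ atTop (𝓝 0)) (a : ℝ) : ∫ w in Ioi a, PhiU ψ w = ψ (Ginv ψ a) := by
  have hftc := integral_Ioi_of_hasDerivAt_of_tendsto'
    (fun w _ => (hasDerivAt_comp_Ginv hd hneg hs w).neg.congr_deriv (neg_neg _))
    (integrableOn_Ioi_PhiU hd hneg hs hinf a) (tendsto_comp_Ginv_atTop hd hneg hs hinf).neg
  simpa only [neg_zero, zero_sub, Pi.neg_apply, neg_neg] using hftc

theorem checkPsi_eq (hs : SurjOn (Gpsi ψ) (Ioi 0) univ) (v : ℝ) :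
    checkPsi ψ v = v + √2 * ψ (Ginv ψ (√2 * v)) := by
  have hG := Gpsi_Ginv hs (√2 * v)
  rw [Gpsi] at hG
  rw [checkPsi, div_eq_iff (by positivity)]
  linear_combination hG - ψ (Ginv ψ (√2 * v)) * Real.sq_sqrt (zero_le_two (α := ℝ))

theorem hasDerivAt_checkPsi (hd : DifferentiableOn ℝ ψ (Ioi 0))
    (hneg : ∀ u ∈ Ioi (0 : ℝ), deriv ψ u < 0) (hs : SurjOn (Gpsi ψ) (Ioi 0) univ) (v : ℝ) :
    HasDerivAt (checkPsi ψ) (1 - 2 * PhiU ψ (√2 * v)) v := by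
  rw [show checkPsi ψ = _ from funext (checkPsi_eq hs)]
  have hscale : HasDerivAt (fun v => √2 * v) √2 v := by simpa using (hasDerivAt_id v).const_mul √2
  refine ((hasDerivAt_id v).add
    (((hasDerivAt_comp_Ginv hd hneg hs (√2 * v)).comp v hscale).const_mul √2)).congr_deriv ?_
  linear_combination -PhiU ψ (√2 * v) * Real.sq_sqrt (zero_le_two (α := ℝ))

end RotatedCurve

theorem rotated_curve_properties_general (ψ : ℝ → ℝ)
    (hC1 : ContDiffOn ℝ 1 ψ (Set.Ioi 0))
    (hneg : ∀ u ∈ Set.Ioi (0:ℝ), deriv ψ u < 0)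
    (h0 : Tendsto ψ (nhdsWithin 0 (Set.Ioi 0)) atTop)
    (hinf : Tendsto ψ atTop (nhds 0)) :
    StrictMonoOn (Gpsi ψ) (Set.Ioi 0) ∧
    ContDiffOn ℝ 1 (Gpsi ψ) (Set.Ioi 0) ∧
    Set.BijOn (Gpsi ψ) (Set.Ioi 0) Set.univ ∧
    (∀ v : ℝ, HasDerivAt (checkPsi ψ) (1 - 2 * PhiU ψ (Real.sqrt 2 * v)) v) ∧
    (∀ v : ℝ,
      MeasureTheory.IntegrableOn (PhiU ψ) (Set.Ioi (Real.sqrt 2 * v)) ∧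
      checkPsi ψ v = Real.sqrt 2 * (∫ w in Set.Ioi (Real.sqrt 2 * v), PhiU ψ w) + v) := by
  have hd : DifferentiableOn ℝ ψ (Ioi 0) := hC1.differentiableOn one_ne_zero
  have hmono := strictMonoOn_Gpsi hd hneg
  have hs := surjOn_Gpsi hd.continuousOn h0 hinf
  refine ⟨hmono, contDiffOn_id.sub hC1, ⟨mapsTo_univ _ _, hmono.injOn, hs⟩,
    hasDerivAt_checkPsi hd hneg hs, fun v => ⟨integrableOn_Ioi_PhiU hd hneg hs hinf _, ?_⟩⟩
  rw [integral_Ioi_PhiU hd hneg hs hinf, checkPsi_eq hs]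
  ring

theorem rotated_curve_properties (ψ : ℝ → ℝ)
    (hpos : ∀ u ∈ Set.Ioi (0:ℝ), 0 < ψ u)
    (hC1 : ContDiffOn ℝ 1 ψ (Set.Ioi 0))
    (hneg : ∀ u ∈ Set.Ioi (0:ℝ), deriv ψ u < 0)
    (h0 : Tendsto ψ (nhdsWithin 0 (Set.Ioi 0)) atTop)
    (hinf : Tendsto ψ atTop (nhds 0)) :
    StrictMonoOn (Gpsi ψ) (Set.Ioi 0) ∧
    ContDiffOn ℝ 1 (Gpsi ψ) (Set.Ioi 0) ∧
    Set.BijOn (Gpsi ψ) (Set.Ioi 0) Set.univ ∧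
    (∀ v : ℝ, HasDerivAt (checkPsi ψ) (1 - 2 * PhiU ψ (Real.sqrt 2 * v)) v) ∧
    (∀ v : ℝ,
      MeasureTheory.IntegrableOn (PhiU ψ) (Set.Ioi (Real.sqrt 2 * v)) ∧
      checkPsi ψ v = Real.sqrt 2 * (∫ w in Set.Ioi (Real.sqrt 2 * v), PhiU ψ w) + v) :=
  rotated_curve_properties_general ψ hC1 hneg h0 hinf
end

section
/- Let ρ: ℝ → (0,1) be continuous with ∫_{−∞}^{0} (1−ρ(w)) dw < ∞ and ∫_{0}^{∞} ρ(w) dw < ∞, and assume the particle–hole symmetry ρ(−w) = 1 − ρ(w) for all w ∈ ℝ. Let ζ(v) = ∫_{−∞}^{v} (1−ρ(w)) dw, ψ(u) = ∫_{ζ^{-1}(u)}^{∞} ρ(w) dw, ρ_U(u) = −ψ'(u). Then: (i) ζ^{-1}(u) = u − ψ(u) for every u > 0; and (ii) for every measurable Ψ̄: ℝ → ℝ, setting Ψ(u) = Ψ̄(ζ^{-1}(u)) / (1 − ρ(ζ^{-1}(u))), one has for every r > 0 the identity ∫_{ℝ} Ψ̄(v)² e^{−2r|v|} dv = ∫_{0}^{∞}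 Ψ(u)² e^{−2r|u − ψ(u)|} / (1 + ρ_U(u)) du (both sides possibly equal to +∞ simultaneously). -/
/-!
Particle–hole symmetry turns `ζ(v) = ∫_{-∞}^v ρ(-w) dw` into `∫_{-v}^∞ ρ`, and `ρ(w) + ρ(-w) = 1`
gives `∫_{-v}^v ρ = v`; hence `ζ(v) = v + ∫_v^∞ ρ`, which is (i) at `v = ζ⁻¹(u)`. Differentiating
(i) gives `1 + ρ_U(u) = 1 / ζ'(ζ⁻¹ u) = 1 / (1 - ρ(ζ⁻¹ u))`, so (ii) is the change of variables
`u = ζ(v)`, `du = (1 - ρ(v)) dv`.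
-/

open Real MeasureTheory Set Filter

/-- `ζ(v) = ∫_{-∞}^v (1 - ρ(w)) dw`. -/
noncomputable def zetaFn (ρ : ℝ → ℝ) (v : ℝ) : ℝ := ∫ w in Set.Iic v, (1 - ρ w)

/-- The inverse of `ζ`. -/
noncomputable def zetaInv (ρ : ℝ → ℝ) (u : ℝ) : ℝ := Function.invFun (zetaFn ρ) u

/-- `ψ(u) = ∫_{ζ⁻¹(u)}^∞ ρ(w) dw`. -/
noncomputable def psiOf (ρ : ℝ → ℝ) (u : ℝ) : ℝ := ∫ w in Set.Ioi (zetaInv ρ u), ρ w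

/-- `ρ_U(u) = -ψ'(u)`. -/
noncomputable def rhoUOf (ρ : ℝ → ℝ) (u : ℝ) : ℝ := -deriv (psiOf ρ) u

open Topology

namespace MeasureTheory

variable {E : Type*} [NormedAddCommGroup E] {f : ℝ → E} {a : ℝ}

theorem LocallyIntegrable.integrableOn_Ioi (hf : LocallyIntegrable f) (h : IntegrableOn f (Ioi a))
    (b : ℝ) : IntegrableOn f (Ioi b) :=
  (((hf.integrableOn_isCompact isCompact_Icc).mono_set Ioc_subset_Icc_self).union h).mono_set
    Ioi_subset_Ioc_union_Ioi

variable [NormedSpace ℝ E]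

theorem tendsto_integral_Ioi_atTop (h : IntegrableOn f (Ioi a)) :
    Tendsto (fun b => ∫ x in Ioi b, f x) atTop (𝓝 0) := by
  have hlim := (tendsto_const_nhds (x := ∫ x in Ioi a, f x)).sub
    (intervalIntegral_tendsto_integral_Ioi a h tendsto_id)
  rw [sub_self] at hlim
  refine hlim.congr' ?_
  filter_upwards [eventually_ge_atTop a] with b hab
  rw [id, ← intervalIntegral.integral_Ioi_sub_Ioi h hab, sub_sub_cancel]

theorem hasDerivAt_integral_Ioi [CompleteSpace E] (hf : Continuous f) (h : IntegrableOn f (Ioi a))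
    (x : ℝ) : HasDerivAt (fun b => ∫ t in Ioi b, f t) (-f x) x := by
  have hsplit : (fun b => ∫ t in Ioi b, f t) = fun b => (∫ t in Ioi a, f t) - ∫ t in a..b, f t :=
    funext fun b => by
      rw [← intervalIntegral.integral_Ioi_sub_Ioi' h (hf.locallyIntegrable.integrableOn_Ioi h b),
        sub_sub_cancel]
  rw [hsplit]
  exact ((hf.integral_hasStrictDerivAt a x).hasDerivAt).const_sub _

end MeasureTheory

section ParticleHole

variable {ρ : ℝ → ℝ}

theorem zetaFn_eq_integral_Ioi_neg (hsym : ∀ w, ρ (-w) = 1 - ρ w) (v : ℝ) :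
    zetaFn ρ v = ∫ w in Ioi (-v), ρ w := by
  simp only [zetaFn, ← hsym, integral_comp_neg_Iic]

theorem integral_neg_to_self_eq_self (hcont : Continuous ρ) (hsym : ∀ w, ρ (-w) = 1 - ρ w)
    (v : ℝ) : ∫ w in (-v)..v, ρ w = v := by
  have hreflect : ∫ w in (-v)..v, ρ (-w) = ∫ w in (-v)..v, ρ w := by
    rw [intervalIntegral.integral_comp_neg, neg_neg]
  have hsum : ∫ w in (-v)..v, (ρ w + ρ (-w)) = 2 * v := by
    simp only [hsym, add_sub_cancel, intervalIntegral.integral_const, smul_eq_mul, mul_one]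
    ring
  rw [intervalIntegral.integral_add (hcont.intervalIntegrable _ _)
    ((by fun_prop : Continuous fun w => ρ (-w)).intervalIntegrable _ _), hreflect] at hsum
  linarith

theorem zetaFn_eq_add_integral_Ioi (hcont : Continuous ρ) (hint : IntegrableOn ρ (Ioi 0))
    (hsym : ∀ w, ρ (-w) = 1 - ρ w) (v : ℝ) :
    zetaFn ρ v = v + ∫ w in Ioi v, ρ w := by
  rw [zetaFn_eq_integral_Ioi_neg hsym, ← intervalIntegral.integral_interval_add_Ioi'
    (hcont.intervalIntegrable (-v) v) (hcont.locallyIntegrable.integrableOn_Ioi hint v),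
    integral_neg_to_self_eq_self hcont hsym]

theorem hasDerivAt_zetaFn (hcont : Continuous ρ) (hint : IntegrableOn ρ (Ioi 0))
    (hsym : ∀ w, ρ (-w) = 1 - ρ w) (v : ℝ) : HasDerivAt (zetaFn ρ) (1 - ρ v) v := by
  rw [funext (zetaFn_eq_integral_Ioi_neg hsym), ← hsym]
  have h := (hasDerivAt_integral_Ioi hcont hint (-v)).comp v (hasDerivAt_neg v)
  rwa [mul_neg_one, neg_neg] at h

end ParticleHole

structure IsParticleHoleSymmetric (ρ : ℝ → ℝ) : Prop where
  continuous : Continuous ρ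
  mem_Ioo : ∀ w, ρ w ∈ Ioo (0 : ℝ) 1
  integrableOn_Ioi : IntegrableOn ρ (Ioi 0)
  neg_eq : ∀ w, ρ (-w) = 1 - ρ w

namespace IsParticleHoleSymmetric

variable {ρ : ℝ → ℝ} {u : ℝ}

theorem hasDerivAt_zetaFn (h : IsParticleHoleSymmetric ρ) (v : ℝ) :
    HasDerivAt (zetaFn ρ) (1 - ρ v) v :=
  _root_.hasDerivAt_zetaFn h.continuous h.integrableOn_Ioi h.neg_eq v

theorem strictMono_zetaFn (h : IsParticleHoleSymmetric ρ) : StrictMono (zetaFn ρ) :=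
  strictMono_of_hasDerivAt_pos h.hasDerivAt_zetaFn fun v => sub_pos.2 (h.mem_Ioo v).2

theorem range_zetaFn (h : IsParticleHoleSymmetric ρ) : range (zetaFn ρ) = Ioi 0 := by
  have hnonneg : ∀ v, 0 ≤ ∫ w in Ioi v, ρ w := fun v =>
    setIntegral_nonneg measurableSet_Ioi fun w _ => (h.mem_Ioo w).1.le
  refine Subset.antisymm (range_subset_iff.2 fun v => ?_) fun u hu => ?_
  · calc 0 ≤ zetaFn ρ (v - 1) := zetaFn_eq_integral_Ioi_neg h.neg_eq _ ▸ hnonneg _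
      _ < zetaFn ρ v := h.strictMono_zetaFn (sub_one_lt v)
  have hbot : Tendsto (zetaFn ρ) atBot (𝓝 0) := by
    rw [funext (zetaFn_eq_integral_Ioi_neg h.neg_eq)]
    exact (tendsto_integral_Ioi_atTop h.integrableOn_Ioi).comp tendsto_neg_atBot_atTop
  obtain ⟨a, ha⟩ := (hbot.eventually (gt_mem_nhds hu)).exists
  refine mem_range_of_exists_le_of_exists_ge
    (continuous_iff_continuousAt.2 fun v => (h.hasDerivAt_zetaFn v).continuousAt)
    ⟨a, ha.le⟩ ⟨u, ?_⟩
  rw [zetaFn_eq_add_integral_Ioi h.continuous h.integrableOn_Ioi h.neg_eq]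
  exact le_add_of_nonneg_right (hnonneg u)

theorem zetaFn_pos (h : IsParticleHoleSymmetric ρ) (v : ℝ) : 0 < zetaFn ρ v :=
  h.range_zetaFn.subset (mem_range_self v)

theorem zetaInv_zetaFn (h : IsParticleHoleSymmetric ρ) (v : ℝ) : zetaInv ρ (zetaFn ρ v) = v :=
  Function.leftInverse_invFun h.strictMono_zetaFn.injective v

theorem zetaFn_zetaInv (h : IsParticleHoleSymmetric ρ) (hu : 0 < u) :
    zetaFn ρ (zetaInv ρ u) = u :=
  Function.invFun_eq (h.range_zetaFn.symm.subset hu)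

theorem zetaInv_eq_sub_psiOf (h : IsParticleHoleSymmetric ρ) (hu : 0 < u) :
    zetaInv ρ u = u - psiOf ρ u := by
  have hζ := zetaFn_eq_add_integral_Ioi h.continuous h.integrableOn_Ioi h.neg_eq (zetaInv ρ u)
  rw [h.zetaFn_zetaInv hu] at hζ
  rw [psiOf]
  linarith

theorem continuousAt_zetaInv (h : IsParticleHoleSymmetric ρ) (hu : 0 < u) :
    ContinuousAt (zetaInv ρ) u := by
  have hmono : MonotoneOn (zetaInv ρ) (Ioi 0) := fun x hx y hy hxy =>
    h.strictMono_zetaFn.le_iff_le.1 (by rwa [h.zetaFn_zetaInv hx, h.zetaFn_zetaInv hy])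
  have himage : zetaInv ρ '' Ioi 0 = univ :=
    eq_univ_of_forall fun v => ⟨zetaFn ρ v, h.zetaFn_pos v, h.zetaInv_zetaFn v⟩
  exact continuousAt_of_monotoneOn_of_image_mem_nhds hmono (Ioi_mem_nhds hu)
    (himage ▸ univ_mem)

theorem hasDerivAt_zetaInv (h : IsParticleHoleSymmetric ρ) (hu : 0 < u) :
    HasDerivAt (zetaInv ρ) (1 - ρ (zetaInv ρ u))⁻¹ u :=
  (h.hasDerivAt_zetaFn _).of_local_left_inverse (h.continuousAt_zetaInv hu)
    (sub_pos.2 (h.mem_Ioo _).2).ne'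
    (eventually_gt_nhds hu |>.mono fun _ hx => h.zetaFn_zetaInv hx)

theorem one_add_rhoUOf (h : IsParticleHoleSymmetric ρ) (hu : 0 < u) :
    1 + rhoUOf ρ u = (1 - ρ (zetaInv ρ u))⁻¹ := by
  have hψ : psiOf ρ =ᶠ[𝓝 u] fun x => x - zetaInv ρ x := by
    filter_upwards [Ioi_mem_nhds hu] with x hx
    rw [h.zetaInv_eq_sub_psiOf hx, sub_sub_cancel]
  rw [rhoUOf, hψ.deriv_eq, ((hasDerivAt_id' u).fun_sub (h.hasDerivAt_zetaInv hu)).deriv]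
  ring

theorem lintegral_Ioi_eq_lintegral_comp_zetaFn (h : IsParticleHoleSymmetric ρ)
    (g : ℝ → ENNReal) :
    ∫⁻ u in Ioi 0, g u = ∫⁻ v, ENNReal.ofReal (1 - ρ v) * g (zetaFn ρ v) := by
  rw [← h.range_zetaFn, ← image_univ, lintegral_image_eq_lintegral_abs_deriv_mul
    MeasurableSet.univ (fun v _ => (h.hasDerivAt_zetaFn v).hasDerivWithinAt)
    h.strictMono_zetaFn.injective.injOn, Measure.restrict_univ]
  refine lintegral_congr fun v => ?_
  rw [abs_of_pos (sub_pos.2 (h.mem_Ioo v).2)]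

end IsParticleHoleSymmetric

theorem norm_identity_under_symmetry_general (ρ : ℝ → ℝ) (hcont : Continuous ρ)
    (hrange : ∀ w, ρ w ∈ Set.Ioo (0:ℝ) 1)
    (hint2 : MeasureTheory.IntegrableOn ρ (Set.Ioi 0))
    (hsym : ∀ w : ℝ, ρ (-w) = 1 - ρ w) :
    (∀ u > (0:ℝ), zetaInv ρ u = u - psiOf ρ u) ∧
    (∀ Ψbar : ℝ → ℝ, Measurable Ψbar → ∀ r > (0:ℝ),
      (∫⁻ v : ℝ, ENNReal.ofReal ((Ψbar v) ^ 2 * Real.exp (-2 * r * |v|)))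
        = ∫⁻ u in Set.Ioi (0:ℝ),
            ENNReal.ofReal ((Ψbar (zetaInv ρ u) / (1 - ρ (zetaInv ρ u))) ^ 2
              * Real.exp (-2 * r * |u - psiOf ρ u|) / (1 + rhoUOf ρ u))) := by
  have hρ : IsParticleHoleSymmetric ρ := ⟨hcont, hrange, hint2, hsym⟩
  refine ⟨fun u hu => hρ.zetaInv_eq_sub_psiOf hu, fun Ψbar _ r _ => ?_⟩
  rw [hρ.lintegral_Ioi_eq_lintegral_comp_zetaFn]
  refine lintegral_congr fun v => ?_
  have hζ : zetaFn ρ v - psiOf ρ (zetaFn ρ v) = v := by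
    rw [← hρ.zetaInv_eq_sub_psiOf (hρ.zetaFn_pos v), hρ.zetaInv_zetaFn]
  have hpos : 0 < 1 - ρ v := sub_pos.2 (hrange v).2
  rw [hζ, hρ.one_add_rhoUOf (hρ.zetaFn_pos v), hρ.zetaInv_zetaFn, ← ENNReal.ofReal_mul hpos.le]
  congr 1
  field_simp

theorem norm_identity_under_symmetry (ρ : ℝ → ℝ) (hcont : Continuous ρ)
    (hrange : ∀ w, ρ w ∈ Set.Ioo (0:ℝ) 1)
    (hint1 : MeasureTheory.IntegrableOn (fun w => 1 - ρ w) (Set.Iic 0))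
    (hint2 : MeasureTheory.IntegrableOn ρ (Set.Ioi 0))
    (hsym : ∀ w : ℝ, ρ (-w) = 1 - ρ w) :
    (∀ u > (0:ℝ), zetaInv ρ u = u - psiOf ρ u) ∧
    (∀ Ψbar : ℝ → ℝ, Measurable Ψbar → ∀ r > (0:ℝ),
      (∫⁻ v : ℝ, ENNReal.ofReal ((Ψbar v) ^ 2 * Real.exp (-2 * r * |v|)))
        = ∫⁻ u in Set.Ioi (0:ℝ),
            ENNReal.ofReal ((Ψbar (zetaInv ρ u) / (1 - ρ (zetaInv ρ u))) ^ 2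
              * Real.exp (-2 * r * |u - psiOf ρ u|) / (1 + rhoUOf ρ u))) :=
  norm_identity_under_symmetry_general ρ hcont hrange hint2 hsym
end

section
/- Fix α > 0 and let ψ ∈ X_U with ρ_Uψ := −ψ'. Assume there exist C₁ ≥ C₂ > 0 such that C₂·ρ_U^∞(u) ≤ ρ_Uψ(u) ≤ C₁·ρ_U^∞(u) for all u > 0, and that limsup_{u↓0} |ρ_Uψ(u) − ρ_U^∞(u)| < ∞. Then there exist constants C̃₁ ≥ C̃₂ > 0 such that ρ^∞(v;C̃₂) ≤ Φ_U(ψ)(v) ≤ ρ^∞(v;C̃₁) for all v ∈ ℝ. -/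
open Real MeasureTheory Set Filter

/-- `ρ_U^∞(u) = 1/(e^{αu} - 1)`. -/
noncomputable def rhoUInf (α u : ℝ) : ℝ := 1 / (Real.exp (α * u) - 1)

/-- `ρ^∞(v; C) = C/(e^{αv} + C)`. -/
noncomputable def rhoInf (α v C : ℝ) : ℝ := C / (Real.exp (α * v) + C)

/-!
The profile `ψ∞(u) = -log (1 - e^{-αu}) / α` satisfies `ψ∞' = -ρ_U^∞` and
`ρ_U^∞(u) = e^{α(ψ∞(u) - u)}`. The limsup hypothesis bounds `(ψ∞ - ψ)'` near `0` and both
functions vanish at `∞`, so `|ψ∞ - ψ| ≤ B` on `(0, ∞)`. For `w = G_ψ⁻¹(v)`, i.e. `v = w - ψ(w)`,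
this gives `ρ_U^∞(w) e^{αv} = e^{α(ψ∞(w) - ψ(w))} ∈ [e^{-αB}, e^{αB}]`, so `r = -ψ'(w)` satisfies
`C₂ e^{-αB} ≤ r e^{αv} ≤ C₁ e^{αB}`. Finally `Φ_U(ψ)(v) = r / (1 + r)` and
`ρ^∞(v; C) = c / (1 + c)` with `c = C e^{-αv}`, and `x ↦ x / (1 + x)` is monotone.
-/

open Topology Bornology

noncomputable def psiInf (α u : ℝ) : ℝ := -log (1 - exp (-(α * u))) / α

section psiInf

variable {α u : ℝ}

theorem one_sub_exp_neg_mul_pos (hα : 0 < α) (hu : 0 < u) : 0 < 1 - exp (-(α * u)) :=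
  sub_pos.2 (exp_lt_one_iff.2 (neg_neg_of_pos (mul_pos hα hu)))

theorem rhoUInf_eq_exp_neg_div : rhoUInf α u = exp (-(α * u)) / (1 - exp (-(α * u))) := by
  rw [rhoUInf, exp_neg]
  field_simp

theorem rhoUInf_eq_exp (hα : 0 < α) (hu : 0 < u) : rhoUInf α u = exp (α * (psiInf α u - u)) := by
  rw [rhoUInf_eq_exp_neg_div, psiInf, mul_sub, mul_div_cancel₀ _ hα.ne', sub_eq_add_neg (-log _),
    exp_add, exp_neg (log _), exp_log (one_sub_exp_neg_mul_pos hα hu), div_eq_inv_mul]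

theorem hasDerivAt_psiInf (hα : 0 < α) (hu : 0 < u) : HasDerivAt (psiInf α) (-rhoUInf α u) u := by
  have hin : HasDerivAt (fun u => 1 - exp (-(α * u))) (α * exp (-(α * u))) u :=
    (((hasDerivAt_id u).const_mul α).neg.exp.const_sub 1).congr_deriv (by simp [mul_comm])
  refine ((hin.log (one_sub_exp_neg_mul_pos hα hu).ne').neg.div_const α).congr_deriv ?_
  rw [rhoUInf_eq_exp_neg_div]
  field_simp

theorem tendsto_psiInf_atTop (hα : 0 < α) : Tendsto (psiInf α) atTop (𝓝 0) := by
  have hexp : Tendsto (fun u => exp (-(α * u))) atTop (𝓝 0) :=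
    tendsto_exp_atBot.comp (tendsto_neg_atTop_atBot.comp (tendsto_id.const_mul_atTop hα))
  unfold psiInf
  simpa using ((hexp.const_sub 1).log (by norm_num)).neg.div_const α

end psiInf

theorem isBounded_image_Ioo_of_hasDerivAt {f f' : ℝ → ℝ} {a b M : ℝ}
    (hf : ∀ x ∈ Ioo a b, HasDerivAt f (f' x) x) (hM : ∀ x ∈ Ioo a b, |f' x| ≤ M) :
    IsBounded (f '' Ioo a b) := by
  refine Metric.isBounded_iff.2 ⟨M * (b - a), ?_⟩
  rintro _ ⟨x, hx, rfl⟩ _ ⟨y, hy, rfl⟩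
  have hM0 : 0 ≤ M := (abs_nonneg _).trans (hM x hx)
  have hxy : |x - y| ≤ b - a :=
    abs_sub_le_iff.2 ⟨by linarith [hx.2, hy.1], by linarith [hx.1, hy.2]⟩
  calc dist (f x) (f y) = ‖f x - f y‖ := dist_eq_norm _ _
    _ ≤ M * ‖x - y‖ := (convex_Ioo a b).norm_image_sub_le_of_norm_hasDerivWithin_le
        (fun z hz => (hf z hz).hasDerivWithinAt) hM hy hx
    _ ≤ M * (b - a) := by rw [Real.norm_eq_abs]; gcongr

theorem exists_abs_le_of_hasDerivAt_of_tendsto {f f' : ℝ → ℝ} {a L : ℝ}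
    (hf : ∀ x ∈ Ioi a, HasDerivAt f (f' x) x)
    (hf' : IsBoundedUnder (· ≤ ·) (𝓝[>] a) fun x => |f' x|) (hL : Tendsto f atTop (𝓝 L)) :
    ∃ B, ∀ x ∈ Ioi a, |f x| ≤ B := by
  obtain ⟨M, hM⟩ := hf'
  obtain ⟨b, hab, hM⟩ := mem_nhdsGT_iff_exists_Ioo_subset.1 (eventually_map.1 hM)
  obtain ⟨N, hN⟩ := eventually_atTop.1 (hL.eventually (Metric.ball_mem_nhds L one_pos))
  have hnear : IsBounded (f '' Ioo a b) :=
    isBounded_image_Ioo_of_hasDerivAt (fun x hx => hf x hx.1) hM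
  have hmid : IsBounded (f '' Icc b N) :=
    (isCompact_Icc.image_of_continuousOn fun x hx =>
      (hf x (lt_of_lt_of_le hab hx.1)).continuousAt.continuousWithinAt).isBounded
  have hfar : IsBounded (f '' Ici N) := Metric.isBounded_ball.subset (image_subset_iff.2 hN)
  have hall := (hnear.union hmid).union hfar
  rw [← image_union, ← image_union] at hall
  obtain ⟨B, hB⟩ := isBounded_iff_forall_norm_le.1 hall
  refine ⟨B, fun x hx => hB _ (mem_image_of_mem f ?_)⟩
  rcases lt_or_ge x b with hxb | hbx
  · exact Or.inl (Or.inl ⟨hx, hxb⟩)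
  rcases le_or_gt x N with hxN | hNx
  · exact Or.inl (Or.inr ⟨hbx, hxN⟩)
  · exact Or.inr hNx.le

theorem Ginv_spec {ψ : ℝ → ℝ} {L : ℝ} (hψ : ContinuousOn ψ (Ioi 0))
    (h0 : Tendsto ψ (𝓝[>] 0) atTop) (hinf : Tendsto ψ atTop (𝓝 L)) (v : ℝ) :
    0 < Ginv ψ v ∧ Ginv ψ v - ψ (Ginv ψ v) = v := by
  have hbot : Tendsto (Gpsi ψ) (𝓝[>] 0) atBot :=
    (tendsto_nhdsWithin_of_tendsto_nhds tendsto_id).add_atBot (tendsto_neg_atTop_atBot.comp h0)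
  have htop : Tendsto (Gpsi ψ) atTop atTop := tendsto_id.atTop_add hinf.neg
  have hv : v ∈ Gpsi ψ '' Ioi 0 :=
    isPreconnected_Ioi.intermediate_value_Iii (l₁ := 𝓝[>] 0) inf_le_right
      (le_principal_iff.2 (Ioi_mem_atTop 0)) (continuousOn_id.sub hψ) hbot htop (mem_univ v)
  exact ⟨Function.invFunOn_mem hv, Function.invFunOn_eq hv⟩

theorem rhoUInf_mul_exp_mem_Icc {α w p v B : ℝ} (hα : 0 < α) (hw : 0 < w) (hv : w - p = v)
    (hB : |psiInf α w - p| ≤ B) :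
    rhoUInf α w * exp (α * v) ∈ Icc (exp (-(α * B))) (exp (α * B)) := by
  obtain ⟨hB_lo, hB_hi⟩ := abs_le.1 hB
  rw [rhoUInf_eq_exp hα hw, ← exp_add, ← hv, ← mul_add, sub_add_sub_cancel, ← mul_neg]
  exact ⟨by gcongr, by gcongr⟩

section rhoInf

variable {α v C r : ℝ}

theorem rhoInf_le_of_le_mul_exp (hC : 0 ≤ C) (h : C ≤ r * exp (α * v)) :
    rhoInf α v C ≤ r / (1 + r) := by
  have hr : 0 ≤ r := (mul_nonneg_iff_of_pos_right (exp_pos _)).1 (hC.trans h)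
  rw [rhoInf, div_le_div_iff₀ (by positivity) (by positivity)]
  nlinarith

theorem le_rhoInf_of_mul_exp_le (hr : 0 ≤ r) (h : r * exp (α * v) ≤ C) :
    r / (1 + r) ≤ rhoInf α v C := by
  have hC : 0 ≤ C := (mul_nonneg hr (exp_pos _).le).trans h
  rw [rhoInf, div_le_div_iff₀ (by positivity) (by positivity)]
  nlinarith

theorem rhoInf_le_div_one_add_le {ρ A C₁ C₂ : ℝ} (hC₂ : 0 < C₂)
    (hρ : ρ * exp (α * v) ∈ Icc (exp (-A)) (exp A)) (hr : C₂ * ρ ≤ r ∧ r ≤ C₁ * ρ) :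
    rhoInf α v (C₂ * exp (-A)) ≤ r / (1 + r) ∧ r / (1 + r) ≤ rhoInf α v (C₁ * exp A) := by
  have hlo : C₂ * exp (-A) ≤ r * exp (α * v) :=
    calc C₂ * exp (-A) ≤ C₂ * (ρ * exp (α * v)) := by gcongr; exact hρ.1
      _ ≤ r * exp (α * v) := by rw [← mul_assoc]; gcongr; exact hr.1
  have hr₀ : 0 ≤ r :=
    (mul_nonneg_iff_of_pos_right (exp_pos _)).1 ((by positivity : (0:ℝ) ≤ _).trans hlo)
  have hρ₀ : 0 < ρ := (mul_pos_iff_of_pos_right (exp_pos _)).1 ((exp_pos _).trans_le hρ.1)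
  have hC₁ : 0 ≤ C₁ := (mul_nonneg_iff_of_pos_right hρ₀).1 (hr₀.trans hr.2)
  have hhi : r * exp (α * v) ≤ C₁ * exp A :=
    calc r * exp (α * v) ≤ C₁ * (ρ * exp (α * v)) := by rw [← mul_assoc]; gcongr; exact hr.2
      _ ≤ C₁ * exp A := by gcongr; exact hρ.2
  exact ⟨rhoInf_le_of_le_mul_exp (by positivity) hlo, le_rhoInf_of_mul_exp_le hr₀ hhi⟩

end rhoInf

theorem PhiU_bounds_general (α : ℝ) (hα : 0 < α) (ψ : ℝ → ℝ)
    (hC1 : ContDiffOn ℝ 1 ψ (Set.Ioi 0))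
    (h0 : Tendsto ψ (nhdsWithin 0 (Set.Ioi 0)) atTop)
    (hinf : Tendsto ψ atTop (nhds 0))
    (C₁ C₂ : ℝ) (hC : C₂ ≤ C₁) (hC₂ : 0 < C₂)
    (hbound : ∀ u > (0:ℝ),
      C₂ * rhoUInf α u ≤ -deriv ψ u ∧ -deriv ψ u ≤ C₁ * rhoUInf α u)
    (hlimsup : Filter.IsBoundedUnder (· ≤ ·) (nhdsWithin 0 (Set.Ioi 0))
      (fun u => |(-deriv ψ u) - rhoUInf α u|)) :
    ∃ Ct₁ Ct₂ : ℝ, Ct₂ ≤ Ct₁ ∧ 0 < Ct₂ ∧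
      ∀ v : ℝ, rhoInf α v Ct₂ ≤ PhiU ψ v ∧ PhiU ψ v ≤ rhoInf α v Ct₁ := by
  have hψ' : ∀ u ∈ Ioi (0:ℝ), HasDerivAt ψ (deriv ψ u) u := fun u hu =>
    (hC1.differentiableOn one_ne_zero u hu).differentiableAt (isOpen_Ioi.mem_nhds hu) |>.hasDerivAt
  obtain ⟨B, hB⟩ := exists_abs_le_of_hasDerivAt_of_tendsto
    (fun u hu => ((hasDerivAt_psiInf hα hu).sub (hψ' u hu)).congr_deriv (by ring)) hlimsup
    ((tendsto_psiInf_atTop hα).sub hinf)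
  have hαB : 0 ≤ α * B := mul_nonneg hα.le ((abs_nonneg _).trans (hB 1 (mem_Ioi.2 one_pos)))
  refine ⟨C₁ * exp (α * B), C₂ * exp (-(α * B)), ?_, by positivity, fun v => ?_⟩
  · exact mul_le_mul hC (exp_le_exp.2 (by linarith)) (exp_pos _).le (hC₂.le.trans hC)
  obtain ⟨hw, hv⟩ := Ginv_spec hC1.continuousOn h0 hinf v
  rw [PhiU, sub_eq_add_neg]
  exact rhoInf_le_div_one_add_le hC₂ (rhoUInf_mul_exp_mem_Icc hα hw hv (hB _ hw)) (hbound _ hw)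

theorem PhiU_bounds (α : ℝ) (hα : 0 < α) (ψ : ℝ → ℝ)
    (hpos : ∀ u ∈ Set.Ioi (0:ℝ), 0 < ψ u)
    (hC1 : ContDiffOn ℝ 1 ψ (Set.Ioi 0))
    (hneg : ∀ u ∈ Set.Ioi (0:ℝ), deriv ψ u < 0)
    (h0 : Tendsto ψ (nhdsWithin 0 (Set.Ioi 0)) atTop)
    (hinf : Tendsto ψ atTop (nhds 0))
    (C₁ C₂ : ℝ) (hC : C₂ ≤ C₁) (hC₂ : 0 < C₂)
    (hbound : ∀ u > (0:ℝ),
      C₂ * rhoUInf α u ≤ -deriv ψ u ∧ -deriv ψ u ≤ C₁ * rhoUInf α u)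
    (hlimsup : Filter.IsBoundedUnder (· ≤ ·) (nhdsWithin 0 (Set.Ioi 0))
      (fun u => |(-deriv ψ u) - rhoUInf α u|)) :
    ∃ Ct₁ Ct₂ : ℝ, Ct₂ ≤ Ct₁ ∧ 0 < Ct₂ ∧
      ∀ v : ℝ, rhoInf α v Ct₂ ≤ PhiU ψ v ∧ PhiU ψ v ≤ rhoInf α v Ct₁ :=
  PhiU_bounds_general α hα ψ hC1 h0 hinf C₁ C₂ hC hC₂ hbound hlimsup
end

section
/- (Poincaré inequality, uniform case) Fix α > 0 and set ρ_U(u) = 1/(e^{αu} − 1). There exists a constant c > 0 such that for every f ∈ C¹((0,∞)) with ∫_{0}^{∞} f(u)² du < ∞ and ∫_{0}^{∞} f'(u)² / (ρ_U(u)(1 + ρ_U(u))) du < ∞, one has c·∫_{0}^{∞} f(u)² du ≤ ∫_{0}^{∞} f'(u)² / (ρ_U(u)(1 + ρ_U(u))) du; equivalently, c·∫_{0}^{∞} f(u)² du ≤ ∫_{0}^{∞} f'(u)² (e^{αu} − 1)² e^{−αu} du. -/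
/-!
Since `1 / (ρ_U (1 + ρ_U)) = (e^{αu} - 1)² e^{-αu} = 4 sinh² (αu/2) ≥ α² u²`, it suffices to
prove the Hardy inequality `∫₀^∞ f² ≤ 4 ∫₀^∞ u² f'²`, which gives `c = α² / 4`.
On `[a, b]` it comes from `(u f²)' = f² + 2 u f f' ≥ f² / 2 - 2 u² f'²`. The boundary term
`b f(b)²` is small along a sequence `b → ∞`, because `f²` is integrable while `1 / u` is not;
since `f` need not be differentiable at `0`, one then lets `a → 0`.
-/

open Real MeasureTheory Set Filter Topology

noncomputable def rhoU (α u : ℝ) : ℝ := 1 / (Real.exp (α * u) - 1)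

-- At `u = 0` both sides vanish, thanks to `1 / 0 = 0`.
theorem rhoU_mul_one_add_rhoU (α u : ℝ) :
    rhoU α u * (1 + rhoU α u) = exp (α * u) / (exp (α * u) - 1) ^ 2 := by
  unfold rhoU
  obtain h | h := eq_or_ne (exp (α * u) - 1) 0
  · simp [h]
  · field_simp
    ring

theorem div_rhoU_mul_one_add_rhoU (α u y : ℝ) :
    y / (rhoU α u * (1 + rhoU α u)) = y * (exp (α * u) - 1) ^ 2 * exp (-(α * u)) := by
  rw [rhoU_mul_one_add_rhoU, div_div_eq_mul_div, exp_neg, div_eq_mul_inv]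

theorem sq_le_exp_sub_one_sq_mul_exp_neg (t : ℝ) : t ^ 2 ≤ (exp t - 1) ^ 2 * exp (-t) := by
  have hsinh : (exp t - 1) ^ 2 * exp (-t) = (2 * sinh (t / 2)) ^ 2 := by
    have h1 : exp t = exp (t / 2) ^ 2 := by rw [← exp_nat_mul]; ring_nf
    have h2 : exp (-t) = exp (-(t / 2)) ^ 2 := by rw [← exp_nat_mul]; ring_nf
    have h3 : exp (t / 2) * exp (-(t / 2)) = 1 := by rw [← exp_add]; simp
    rw [sinh_eq, h1, h2]
    linear_combination
      (exp (t / 2) ^ 3 * exp (-(t / 2)) + exp (t / 2) ^ 2 - 2 * exp (t / 2) * exp (-(t / 2))) * h3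
  have habs : |t / 2| ≤ |sinh (t / 2)| := by
    rw [abs_sinh]
    exact self_le_sinh_iff.mpr (abs_nonneg _)
  rw [hsinh, sq_le_sq, abs_mul, abs_two]
  calc |t| = 2 * |t / 2| := by rw [abs_div, abs_two]; ring
    _ ≤ 2 * |sinh (t / 2)| := by gcongr

theorem integral_sq_le_of_hasDerivAt {f f' : ℝ → ℝ} {a b : ℝ} (ha : 0 ≤ a) (hab : a ≤ b)
    (hf : ∀ x ∈ Icc a b, HasDerivAt f (f' x) x)
    (hf2 : IntervalIntegrable (fun x => f x ^ 2) volume a b)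
    (hB : IntervalIntegrable (fun x => x ^ 2 * f' x ^ 2) volume a b) :
    ∫ x in a..b, f x ^ 2 ≤ 2 * (b * f b ^ 2) + 4 * ∫ x in a..b, x ^ 2 * f' x ^ 2 := by
  have hφ : IntervalIntegrable (fun x => f x ^ 2 / 2 - 2 * (x ^ 2 * f' x ^ 2)) volume a b :=
    (hf2.div_const 2).sub (hB.const_mul 2)
  have hmono :
      ∫ x in a..b, (f x ^ 2 / 2 - 2 * (x ^ 2 * f' x ^ 2)) ≤ b * f b ^ 2 - a * f a ^ 2 := by
    refine intervalIntegral.integral_le_sub_of_hasDeriv_right_of_le (g := fun x => x * f x ^ 2)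
      (g' := fun x => 1 * f x ^ 2 + x * (2 * f x ^ 1 * f' x)) hab ?_ ?_
      ((intervalIntegrable_iff_integrableOn_Icc_of_le hab).1 hφ) ?_
    · exact fun x hx => ((hasDerivAt_id x).mul ((hf x hx).pow 2)).continuousAt.continuousWithinAt
    · exact fun x hx =>
        ((hasDerivAt_id x).mul ((hf x (Ioo_subset_Icc_self hx)).pow 2)).hasDerivWithinAt
    · intro x _
      nlinarith [sq_nonneg (2 * x * f' x + f x)]
  rw [intervalIntegral.integral_sub (hf2.div_const 2) (hB.const_mul 2),
    intervalIntegral.integral_div, intervalIntegral.integral_const_mul] at hmono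
  nlinarith [mul_nonneg ha (sq_nonneg (f a))]

theorem frequently_atTop_mul_le_of_integrableOn_Ioi {g : ℝ → ℝ} {a δ : ℝ}
    (hg : IntegrableOn g (Ioi a)) (hδ : 0 < δ) : ∃ᶠ x in atTop, x * g x ≤ δ := by
  intro h
  obtain ⟨M, hM⟩ := eventually_atTop.1 h
  set c := max M (max a 1)
  have hc : 0 < c := lt_max_of_lt_right (lt_max_of_lt_right one_pos)
  suffices IntegrableOn (fun x => x ^ (-1 : ℝ)) (Ioi c) by
    exact absurd ((integrableOn_Ioi_rpow_iff hc).1 this) (by norm_num)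
  refine Integrable.mono'
    ((hg.mono_set (Ioi_subset_Ioi ((le_max_left a 1).trans (le_max_right M _)))).const_mul δ⁻¹)
    (measurable_id.pow_const _).aestronglyMeasurable
    ((ae_restrict_iff' measurableSet_Ioi).2 (ae_of_all _ fun x hx => ?_))
  have hx0 : 0 < x := hc.trans hx
  have hxg : δ < x * g x := lt_of_not_ge (hM x ((le_max_left M _).trans hx.le))
  rw [rpow_neg_one, norm_inv, norm_of_nonneg hx0.le, inv_le_iff_one_le_mul₀ hx0,
    mul_assoc, mul_comm (g x), inv_mul_eq_div, one_le_div hδ]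
  exact hxg.le

theorem integral_Ioi_sq_le_four_mul {f f' : ℝ → ℝ} {a : ℝ} (ha : 0 ≤ a)
    (hf : ∀ x ∈ Ici a, HasDerivAt f (f' x) x) (hf2 : IntegrableOn (fun x => f x ^ 2) (Ioi a))
    (hB : IntegrableOn (fun x => x ^ 2 * f' x ^ 2) (Ioi a)) :
    ∫ x in Ioi a, f x ^ 2 ≤ 4 * ∫ x in Ioi a, x ^ 2 * f' x ^ 2 := by
  refine le_of_forall_pos_le_add fun ε hε => ?_
  have hlim := intervalIntegral_tendsto_integral_Ioi a hf2 tendsto_id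
  obtain ⟨b, hfb, hbε, hab⟩ :=
    ((frequently_atTop_mul_le_of_integrableOn_Ioi hf2 (div_pos hε four_pos)).and_eventually
      ((hlim.eventually (eventually_gt_nhds (sub_lt_self _ (half_pos hε)))).and
        (eventually_ge_atTop a))).exists
  have hIoc : ∀ {g : ℝ → ℝ}, IntegrableOn g (Ioi a) → IntervalIntegrable g volume a b :=
    fun hg =>
      (intervalIntegrable_iff_integrableOn_Ioc_of_le hab).2 (hg.mono_set Ioc_subset_Ioi_self)
  have hB_le : ∫ x in a..b, x ^ 2 * f' x ^ 2 ≤ ∫ x in Ioi a, x ^ 2 * f' x ^ 2 := by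
    rw [intervalIntegral.integral_of_le hab]
    exact setIntegral_mono_set hB (ae_of_all _ fun x => by positivity)
      Ioc_subset_Ioi_self.eventuallyLE
  have hinterval :=
    integral_sq_le_of_hasDerivAt ha hab (fun x hx => hf x hx.1) (hIoc hf2) (hIoc hB)
  simp only [id] at hbε
  linarith

theorem integral_Ioi_zero_sq_le_four_mul {f f' : ℝ → ℝ}
    (hf : ∀ x ∈ Ioi 0, HasDerivAt f (f' x) x) (hf2 : IntegrableOn (fun x => f x ^ 2) (Ioi 0))
    (hB : IntegrableOn (fun x => x ^ 2 * f' x ^ 2) (Ioi 0)) :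
    ∫ x in Ioi 0, f x ^ 2 ≤ 4 * ∫ x in Ioi 0, x ^ 2 * f' x ^ 2 := by
  have hlim : Tendsto (fun a => ∫ x in Ioi a, f x ^ 2) (𝓝[>] 0) (𝓝 (∫ x in Ioi 0, f x ^ 2)) := by
    refine ((aecover_Ioi_of_Ioi (μ := volume) (tendsto_id.mono_left nhdsWithin_le_nhds)
      ).integral_tendsto_of_countably_generated hf2).congr' ?_
    filter_upwards [self_mem_nhdsWithin] with a ha
    rw [Measure.restrict_restrict measurableSet_Ioi, Ioi_inter_Ioi, max_eq_left (le_of_lt ha),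
      id]
  refine le_of_tendsto hlim ?_
  filter_upwards [self_mem_nhdsWithin] with a (ha : 0 < a)
  have hsub : Ioi a ⊆ Ioi 0 := Ioi_subset_Ioi ha.le
  calc ∫ x in Ioi a, f x ^ 2
      ≤ 4 * ∫ x in Ioi a, x ^ 2 * f' x ^ 2 :=
        integral_Ioi_sq_le_four_mul ha.le (fun x hx => hf x (ha.trans_le hx))
          (hf2.mono_set hsub) (hB.mono_set hsub)
    _ ≤ 4 * ∫ x in Ioi 0, x ^ 2 * f' x ^ 2 := by
        refine mul_le_mul_of_nonneg_left ?_ zero_le_four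
        exact setIntegral_mono_set hB (ae_of_all _ fun x => by positivity) hsub.eventuallyLE

theorem poincare_inequality_U (α : ℝ) (hα : 0 < α) :
    ∃ c > (0:ℝ), ∀ f : ℝ → ℝ,
      ContDiffOn ℝ 1 f (Set.Ioi 0) →
      MeasureTheory.IntegrableOn (fun u => f u ^ 2) (Set.Ioi 0) →
      MeasureTheory.IntegrableOn
        (fun u => (deriv f u) ^ 2 / (rhoU α u * (1 + rhoU α u))) (Set.Ioi 0) →
      (c * ∫ u in Set.Ioi (0:ℝ), f u ^ 2)
          ≤ (∫ u in Set.Ioi (0:ℝ), (deriv f u) ^ 2 / (rhoU α u * (1 + rhoU α u))) ∧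
      (c * ∫ u in Set.Ioi (0:ℝ), f u ^ 2)
          ≤ ∫ u in Set.Ioi (0:ℝ),
              (deriv f u) ^ 2 * (Real.exp (α * u) - 1) ^ 2 * Real.exp (-(α * u)) := by
  refine ⟨α ^ 2 / 4, by positivity, fun f hf hf2 hw => ?_⟩
  simp only [div_rhoU_mul_one_add_rhoU] at hw ⊢
  have hweight : ∀ u, α ^ 2 * (u ^ 2 * deriv f u ^ 2)
      ≤ deriv f u ^ 2 * (exp (α * u) - 1) ^ 2 * exp (-(α * u)) := fun u => by
    nlinarith [sq_le_exp_sub_one_sq_mul_exp_neg (α * u), sq_nonneg (deriv f u)]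
  have hB : IntegrableOn (fun u => u ^ 2 * deriv f u ^ 2) (Ioi 0) := by
    refine Integrable.mono' (hw.const_mul (α ^ 2)⁻¹)
      ((measurable_id.pow_const 2).mul ((measurable_deriv f).pow_const 2)).aestronglyMeasurable
      (ae_of_all _ fun u => ?_)
    rw [norm_of_nonneg (by positivity), le_inv_mul_iff₀ (by positivity)]
    exact hweight u
  have hderiv : ∀ x ∈ Ioi (0 : ℝ), HasDerivAt f (deriv f x) x := fun x hx =>
    ((hf.contDiffAt (isOpen_Ioi.mem_nhds hx)).differentiableAt one_ne_zero).hasDerivAt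
  have hardy := integral_Ioi_zero_sq_le_four_mul hderiv hf2 hB
  have hweighted : α ^ 2 * ∫ u in Ioi 0, u ^ 2 * deriv f u ^ 2
      ≤ ∫ u in Ioi 0, deriv f u ^ 2 * (exp (α * u) - 1) ^ 2 * exp (-(α * u)) := by
    rw [← integral_const_mul]
    exact setIntegral_mono (hB.const_mul _) hw fun u => hweight u
  have hmain : α ^ 2 / 4 * ∫ u in Ioi 0, f u ^ 2
      ≤ ∫ u in Ioi 0, deriv f u ^ 2 * (exp (α * u) - 1) ^ 2 * exp (-(α * u)) :=
    calc α ^ 2 / 4 * ∫ u in Ioi 0, f u ^ 2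
        ≤ α ^ 2 / 4 * (4 * ∫ u in Ioi 0, u ^ 2 * deriv f u ^ 2) := by gcongr
      _ = α ^ 2 * ∫ u in Ioi 0, u ^ 2 * deriv f u ^ 2 := by ring
      _ ≤ _ := hweighted
  exact ⟨hmain, hmain⟩
end

section
/- (Poincaré inequality, restricted uniform case) Fix β > 0 and set ρ_R(u) = 1/(e^{βu} + 1). There exists a constant c > 0 such that for every f ∈ C¹([0,∞)) with f'(0) = 0, ∫_{0}^{∞} f(u)² du < ∞ and ∫_{0}^{∞} f'(u)² / (ρ_R(u)(1 − ρ_R(u))) du < ∞, one has c·∫_{0}^{∞} f(u)² du ≤ ∫_{0}^{∞} f'(u)² / (ρ_R(u)(1 − ρ_R(u))) du; equivalently, c·∫_{0}^{∞} f(u)² du ≤ ∫_{0}^{∞} f'(u)² (e^{βu} + 1)² e^{−βu} du. -/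
open Real MeasureTheory Set Filter

/-- `ρ_R(u) = 1/(e^{βu} + 1)`. -/
noncomputable def rhoR (β u : ℝ) : ℝ := 1 / (Real.exp (β * u) + 1)

/-!
By the weighted Cauchy–Schwarz inequality with the integrable weight `ρ_R (1 - ρ_R) ≤ e^{-βu}`,
`f'` is integrable on `(u, ∞)`, so `f` has a limit at infinity, which must be `0` since `f²` is
integrable. Hence `f u = -∫_u^∞ f'`, and Cauchy–Schwarz once more gives
`f(u)² ≤ D ∫_u^∞ ρ_R (1 - ρ_R) ≤ D e^{-βu} / β`, where `D = ∫_0^∞ f'² / (ρ_R (1 - ρ_R))`.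
Integrating over `u > 0` yields `β² ∫ f² ≤ D`.
-/

open Topology

lemma div_rhoR_mul_one_sub_rhoR (β u x : ℝ) :
    x / (rhoR β u * (1 - rhoR β u)) = x * (exp (β * u) + 1) ^ 2 * exp (-(β * u)) := by
  have : exp (β * u) + 1 ≠ 0 := by positivity
  rw [rhoR, exp_neg]
  field_simp
  ring

lemma rhoR_mul_one_sub_rhoR_eq (β u : ℝ) :
    rhoR β u * (1 - rhoR β u) = exp (β * u) / (exp (β * u) + 1) ^ 2 := by
  have : exp (β * u) + 1 ≠ 0 := by positivity
  rw [rhoR]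
  field_simp
  ring

lemma rhoR_mul_one_sub_rhoR_pos (β u : ℝ) : 0 < rhoR β u * (1 - rhoR β u) := by
  rw [rhoR_mul_one_sub_rhoR_eq]
  positivity

lemma sq_div_rhoR_mul_one_sub_rhoR_nonneg (β u x : ℝ) :
    0 ≤ x ^ 2 / (rhoR β u * (1 - rhoR β u)) :=
  div_nonneg (sq_nonneg x) (rhoR_mul_one_sub_rhoR_pos β u).le

lemma rhoR_mul_one_sub_rhoR_le_exp_neg (β u : ℝ) :
    rhoR β u * (1 - rhoR β u) ≤ exp (-(β * u)) := by
  have hE := exp_pos (β * u)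
  rw [rhoR_mul_one_sub_rhoR_eq, exp_neg, div_le_iff₀ (by positivity)]
  field_simp
  nlinarith

lemma continuous_rhoR_mul_one_sub_rhoR (β : ℝ) :
    Continuous fun u => rhoR β u * (1 - rhoR β u) := by
  simp_rw [rhoR_mul_one_sub_rhoR_eq]
  exact Continuous.div (by fun_prop) (by fun_prop) fun u => by positivity

lemma integral_exp_neg_mul_Ioi {β : ℝ} (hβ : 0 < β) (a : ℝ) :
    ∫ u in Ioi a, exp (-(β * u)) = exp (-(β * a)) / β := by
  have := integral_exp_mul_Ioi (neg_lt_zero.2 hβ) a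
  simp only [neg_mul] at this
  rw [this, neg_div_neg_eq]

lemma integrableOn_exp_neg_mul_Ioi {β : ℝ} (hβ : 0 < β) (a : ℝ) :
    IntegrableOn (fun u => exp (-(β * u))) (Ioi a) := by
  simpa only [neg_mul] using integrableOn_exp_mul_Ioi (neg_lt_zero.2 hβ) a

lemma integrableOn_rhoR_mul_one_sub_rhoR_Ioi {β : ℝ} (hβ : 0 < β) (a : ℝ) :
    IntegrableOn (fun u => rhoR β u * (1 - rhoR β u)) (Ioi a) := by
  refine (integrableOn_exp_neg_mul_Ioi hβ a).mono'
    (continuous_rhoR_mul_one_sub_rhoR β).aestronglyMeasurable (ae_of_all _ fun u => ?_)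
  rw [norm_of_nonneg (rhoR_mul_one_sub_rhoR_pos β u).le]
  exact rhoR_mul_one_sub_rhoR_le_exp_neg β u

lemma setIntegral_rhoR_mul_one_sub_rhoR_Ioi_le {β : ℝ} (hβ : 0 < β) (a : ℝ) :
    ∫ u in Ioi a, rhoR β u * (1 - rhoR β u) ≤ exp (-(β * a)) / β := by
  rw [← integral_exp_neg_mul_Ioi hβ]
  exact setIntegral_mono (integrableOn_rhoR_mul_one_sub_rhoR_Ioi hβ a)
    (integrableOn_exp_neg_mul_Ioi hβ a) (rhoR_mul_one_sub_rhoR_le_exp_neg β)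

lemma abs_le_sq_div_add {x y : ℝ} (hy : 0 < y) : |x| ≤ (x ^ 2 / y + y) / 2 := by
  rw [le_div_iff₀ two_pos, div_add' _ _ _ hy.ne', le_div_iff₀ hy, ← sq_abs x]
  nlinarith [sq_nonneg (|x| - y)]

section WeightedCauchySchwarz

variable {α : Type*} [MeasurableSpace α] {μ : Measure α} {g v : α → ℝ}

lemma integrable_of_integrable_sq_div (hg : AEStronglyMeasurable g μ) (hv : ∀ᵐ x ∂μ, 0 < v x)
    (hgv : Integrable (fun x => g x ^ 2 / v x) μ) (hvi : Integrable v μ) : Integrable g μ :=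
  ((hgv.add hvi).div_const 2).mono' hg <| hv.mono fun _ hx => abs_le_sq_div_add hx

theorem sq_integral_le_integral_sq_div_mul_integral (hv : ∀ᵐ x ∂μ, 0 < v x)
    (hg : Integrable g μ) (hgv : Integrable (fun x => g x ^ 2 / v x) μ) (hvi : Integrable v μ) :
    (∫ x, g x ∂μ) ^ 2 ≤ (∫ x, g x ^ 2 / v x ∂μ) * ∫ x, v x ∂μ := by
  -- `0 ≤ ∫ (t g + v)² / v` for every `t`, so the discriminant of this quadratic in `t` is `≤ 0`.
  have hquad : ∀ t : ℝ, 0 ≤ (∫ x, g x ^ 2 / v x ∂μ) * (t * t) + 2 * (∫ x, g x ∂μ) * t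
      + ∫ x, v x ∂μ := by
    intro t
    have hexpand : (fun x => (t * g x + v x) ^ 2 / v x) =ᵐ[μ]
        fun x => g x ^ 2 / v x * (t * t) + 2 * g x * t + v x := by
      filter_upwards [hv] with x hx
      field_simp
      ring
    calc (0 : ℝ) ≤ ∫ x, (t * g x + v x) ^ 2 / v x ∂μ :=
          integral_nonneg_of_ae (hv.mono fun x hx => by positivity)
      _ = _ := by
        rw [integral_congr_ae hexpand, integral_add _ hvi, integral_add (hgv.mul_const _)
          ((hg.const_mul 2).mul_const t), integral_mul_const, integral_mul_const,
          integral_const_mul]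
        exact (hgv.mul_const _).add ((hg.const_mul 2).mul_const t)
  have := discrim_le_zero hquad
  rw [discrim] at this
  nlinarith

end WeightedCauchySchwarz

lemma volume_eq_top_of_mem_atTop {s : Set ℝ} (hs : s ∈ atTop) : volume s = ⊤ := by
  obtain ⟨b, hb⟩ := mem_atTop_sets.1 hs
  exact top_le_iff.1 (volume_Ici (a := b) ▸ measure_mono hb)

lemma eq_zero_of_tendsto_of_integrableOn_sq {f : ℝ → ℝ} {a L : ℝ}
    (hf : Tendsto f atTop (𝓝 L)) (hf2 : IntegrableOn (fun x => f x ^ 2) (Ioi a)) : L = 0 :=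
  pow_eq_zero_iff two_ne_zero |>.1 <| IntegrableAtFilter.eq_zero_of_tendsto
    ⟨Ioi a, Ioi_mem_atTop a, hf2⟩ (fun _ => volume_eq_top_of_mem_atTop) (hf.pow 2)

lemma eq_neg_integral_Ioi_deriv {f : ℝ → ℝ} {a : ℝ} (hf : ∀ x ∈ Ici a, DifferentiableAt ℝ f x)
    (hf' : IntegrableOn (deriv f) (Ioi a)) (hf2 : IntegrableOn (fun x => f x ^ 2) (Ioi a)) :
    f a = -∫ x in Ioi a, deriv f x := by
  have hderiv : ∀ x ∈ Ici a, HasDerivAt f (deriv f x) x := fun x hx => (hf x hx).hasDerivAt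
  have hlim := tendsto_limUnder_of_hasDerivAt_of_integrableOn_Ioi
    (fun x hx => hderiv x (mem_Ici_of_Ioi hx)) hf'
  rw [integral_Ioi_of_hasDerivAt_of_tendsto' hderiv hf' hlim,
    eq_zero_of_tendsto_of_integrableOn_sq hlim hf2, zero_sub, neg_neg]

theorem sq_le_integral_sq_deriv_div_mul_integral {f v : ℝ → ℝ} {a : ℝ}
    (hf : ∀ x ∈ Ici a, DifferentiableAt ℝ f x) (hf2 : IntegrableOn (fun x => f x ^ 2) (Ioi a))
    (hv : ∀ x ∈ Ioi a, 0 < v x) (hvi : IntegrableOn v (Ioi a))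
    (hE : IntegrableOn (fun x => deriv f x ^ 2 / v x) (Ioi a)) :
    f a ^ 2 ≤ (∫ x in Ioi a, deriv f x ^ 2 / v x) * ∫ x in Ioi a, v x := by
  have hv' : ∀ᵐ x ∂volume.restrict (Ioi a), 0 < v x := (ae_restrict_mem measurableSet_Ioi).mono hv
  have hf' : IntegrableOn (deriv f) (Ioi a) :=
    integrable_of_integrable_sq_div (measurable_deriv f).aestronglyMeasurable hv' hE hvi
  rw [eq_neg_integral_Ioi_deriv hf hf' hf2, neg_sq]
  exact sq_integral_le_integral_sq_div_mul_integral hv' hf' hE hvi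

lemma sq_le_integral_sq_deriv_div_rhoR_mul_exp_neg {β : ℝ} (hβ : 0 < β) {f : ℝ → ℝ} {a : ℝ}
    (hf : ∀ x ∈ Ici a, DifferentiableAt ℝ f x) (hf2 : IntegrableOn (fun x => f x ^ 2) (Ioi a))
    (hE : IntegrableOn (fun x => deriv f x ^ 2 / (rhoR β x * (1 - rhoR β x))) (Ioi a)) :
    f a ^ 2 ≤ (∫ x in Ioi a, deriv f x ^ 2 / (rhoR β x * (1 - rhoR β x))) * (exp (-(β * a)) / β) :=
  (sq_le_integral_sq_deriv_div_mul_integral hf hf2 (fun x _ => rhoR_mul_one_sub_rhoR_pos β x)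
    (integrableOn_rhoR_mul_one_sub_rhoR_Ioi hβ a) hE).trans <|
    mul_le_mul_of_nonneg_left (setIntegral_rhoR_mul_one_sub_rhoR_Ioi_le hβ a) <|
      setIntegral_nonneg measurableSet_Ioi fun x _ => sq_div_rhoR_mul_one_sub_rhoR_nonneg β x _

theorem poincare_inequality_R (β : ℝ) (hβ : 0 < β) :
    ∃ c > (0:ℝ), ∀ f : ℝ → ℝ,
      ContDiffOn ℝ 1 f (Set.Ici 0) →
      derivWithin f (Set.Ici 0) 0 = 0 →
      MeasureTheory.IntegrableOn (fun u => f u ^ 2) (Set.Ioi 0) →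
      MeasureTheory.IntegrableOn
        (fun u => (deriv f u) ^ 2 / (rhoR β u * (1 - rhoR β u))) (Set.Ioi 0) →
      (c * ∫ u in Set.Ioi (0:ℝ), f u ^ 2)
          ≤ (∫ u in Set.Ioi (0:ℝ), (deriv f u) ^ 2 / (rhoR β u * (1 - rhoR β u))) ∧
      (c * ∫ u in Set.Ioi (0:ℝ), f u ^ 2)
          ≤ ∫ u in Set.Ioi (0:ℝ),
              (deriv f u) ^ 2 * (Real.exp (β * u) + 1) ^ 2 * Real.exp (-(β * u)) := by
  refine ⟨β ^ 2, by positivity, fun f hf _ hf2 hE => ?_⟩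
  simp_rw [← div_rhoR_mul_one_sub_rhoR, and_self]
  set D := ∫ u in Ioi (0:ℝ), deriv f u ^ 2 / (rhoR β u * (1 - rhoR β u))
  have hdiff : ∀ x ∈ Ioi (0:ℝ), DifferentiableAt ℝ f x := fun x hx =>
    (hf.differentiableOn one_ne_zero x (mem_Ici_of_Ioi hx)).differentiableAt (Ici_mem_nhds hx)
  have hpoint : ∀ u ∈ Ioi (0:ℝ), f u ^ 2 ≤ D * (exp (-(β * u)) / β) := by
    intro u hu
    have hsub : Ioi u ⊆ Ioi 0 := Ioi_subset_Ioi (le_of_lt hu)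
    refine (sq_le_integral_sq_deriv_div_rhoR_mul_exp_neg hβ (fun x hx => hdiff x
      (Ici_subset_Ioi.2 hu hx)) (hf2.mono_set hsub) (hE.mono_set hsub)).trans ?_
    gcongr
    exact setIntegral_mono_set hE
      (ae_of_all _ fun x => sq_div_rhoR_mul_one_sub_rhoR_nonneg β x _) hsub.eventuallyLE
  calc β ^ 2 * ∫ u in Ioi 0, f u ^ 2
      ≤ β ^ 2 * ∫ u in Ioi 0, D * (exp (-(β * u)) / β) :=
        mul_le_mul_of_nonneg_left (setIntegral_mono_on hf2
          (((integrableOn_exp_neg_mul_Ioi hβ 0).div_const β).const_mul D) measurableSet_Ioi hpoint)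
          (sq_nonneg β)
    _ = D := by
        rw [integral_const_mul, integral_div, integral_exp_neg_mul_Ioi hβ, mul_zero, neg_zero,
          exp_zero]
        field_simp
end

section
/- (Green kernel, uniform case) Fix α > 0, set ρ_U(u) = 1/(e^{αu} − 1) and C_U(u,v) = (1/α)·ρ_U(max(u,v)) for u, v > 0. Then for every smooth f with compact support contained in (0,∞) and every v > 0: ∫_{0}^{∞} C_U(u,v) · (Q_U f)(u) du = f(v), where (Q_U f)(u) = −d/du [ f'(u) / (ρ_U(u)(1 + ρ_U(u))) ]. That is, C_U is the Green kernel of the operator Q_U, so the covariance C_U(u,v) = (1/α)·ρ_U(u ∨ v) of the static Gaussian fluctuation limit equals the kernel of Q_U^{-1}. -/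
open Real MeasureTheory Set Filter Topology

/-- The operator `Q_U f = -(f'/(ρ_U(1+ρ_U)))'`. -/
noncomputable def QU (α : ℝ) (f : ℝ → ℝ) (u : ℝ) : ℝ :=
  -deriv (fun w => deriv f w / (rhoU α w * (1 + rhoU α w))) u

/-- The Green kernel `C_U(u,v) = (1/α) ρ_U(u ∨ v)`. -/
noncomputable def CU (α u v : ℝ) : ℝ := (1 / α) * rhoU α (max u v)

theorem green_kernel_U (α : ℝ) (hα : 0 < α) :
    ∀ f : ℝ → ℝ, ContDiff ℝ (⊤ : ℕ∞) f → HasCompactSupport f → tsupport f ⊆ Set.Ioi 0 →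
      ∀ v > (0:ℝ), (∫ u in Set.Ioi (0:ℝ), CU α u v * QU α f u) = f v := by
  intro f hf hcs hsupp v hv
  have hftop : ContDiff ℝ ((⊤:ℕ∞):WithTop ℕ∞) f := hf.of_le (by simp)
  have hf' : Differentiable ℝ f := hftop.differentiable (by simp)
  set K := tsupport f with hKdef
  have hKopen : IsOpen Kᶜ := (isClosed_tsupport f).isOpen_compl
  have hDf0 : ∀ x ∉ K, deriv f x = 0 := by
    intro x hx
    have hev : f =ᶠ[𝓝 x] (fun _ => 0) := by
      filter_upwards [hKopen.mem_nhds hx] with y hy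
      exact image_eq_zero_of_notMem_tsupport hy
    rw [hev.deriv_eq]
    exact deriv_const x 0
  set g : ℝ → ℝ := fun u => deriv f u / (rhoU α u * (1 + rhoU α u)) with hgdef
  have hg0 : ∀ x ∉ K, g x = 0 := by
    intro x hx
    simp [hgdef, hDf0 x hx]
  have hQg : ∀ x, QU α f x = -deriv g x := fun x => rfl
  have hQ0 : ∀ x ∉ K, QU α f x = 0 := by
    intro x hx
    have hev : g =ᶠ[𝓝 x] (fun _ => 0) := by
      filter_upwards [hKopen.mem_nhds hx] with y hy using hg0 y hy
    rw [hQg, hev.deriv_eq, deriv_const x 0, neg_zero]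
  -- positivity facts
  have hE : ∀ u : ℝ, 0 < u → 1 < Real.exp (α * u) := by
    intro u hu
    have h1 : (0:ℝ) < α * u := mul_pos hα hu
    calc (1:ℝ) = Real.exp 0 := by simp
      _ < Real.exp (α * u) := Real.exp_lt_exp.mpr h1
  have hden : ∀ u : ℝ, 0 < u → Real.exp (α * u) - 1 ≠ 0 := by
    intro u hu
    have := hE u hu
    linarith
  have hrhopos : ∀ u : ℝ, 0 < u → 0 < rhoU α u := by
    intro u hu
    have := hE u hu
    have h2 : 0 < Real.exp (α * u) - 1 := by linarith
    rw [rhoU]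
    positivity
  have hwpos : ∀ u : ℝ, 0 < u → 0 < rhoU α u * (1 + rhoU α u) := by
    intro u hu
    have h1 := hrhopos u hu
    nlinarith
  have hwne : ∀ u ∈ Ioi (0:ℝ), rhoU α u * (1 + rhoU α u) ≠ 0 :=
    fun u hu => (hwpos u hu).ne'
  -- smoothness of g on Ioi 0
  have hdf : ContDiff ℝ ((⊤:ℕ∞):WithTop ℕ∞) (deriv f) := (contDiff_infty_iff_deriv.mp hftop).2
  have hexpC : ContDiff ℝ ((⊤:ℕ∞):WithTop ℕ∞) (fun u : ℝ => Real.exp (α * u) - 1) :=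
    ((contDiff_const.mul contDiff_id).exp).sub contDiff_const
  have hrhoC : ContDiffOn ℝ ((⊤:ℕ∞):WithTop ℕ∞) (rhoU α) (Ioi 0) := by
    have : ContDiffOn ℝ ((⊤:ℕ∞):WithTop ℕ∞) (fun u : ℝ => 1 / (Real.exp (α * u) - 1)) (Ioi 0) :=
      contDiffOn_const.div hexpC.contDiffOn (fun x hx => hden x hx)
    exact this
  have hgC : ContDiffOn ℝ ((⊤:ℕ∞):WithTop ℕ∞) g (Ioi 0) :=
    hdf.contDiffOn.div (hrhoC.mul (contDiffOn_const.add hrhoC)) hwne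
  have hgdiff : ∀ u ∈ Ioi (0:ℝ), DifferentiableAt ℝ g u := by
    intro u hu
    exact (hgC.contDiffAt (isOpen_Ioi.mem_nhds hu)).differentiableAt (by simp)
  have hgderiv_cont : ContinuousOn (deriv g) (Ioi 0) := by
    have h1 : ContDiffOn ℝ 1 g (Ioi 0) := hgC.of_le (by exact_mod_cast le_top)
    have h2 := h1.continuousOn_derivWithin isOpen_Ioi.uniqueDiffOn le_rfl
    exact h2.congr fun x hx => (derivWithin_of_isOpen isOpen_Ioi hx).symm
  have hrhocont : ContinuousOn (rhoU α) (Ioi 0) := hrhoC.continuousOn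
  -- derivative of rho
  have hrho' : ∀ u ∈ Ioi (0:ℝ), HasDerivAt (rhoU α)
      (-(α * (rhoU α u * (1 + rhoU α u)))) u := by
    intro u hu
    have h1 : HasDerivAt (fun y : ℝ => Real.exp (α * y) - 1)
        (Real.exp (α * u) * (α * 1)) u :=
      (((hasDerivAt_id u).const_mul α).exp).sub_const 1
    have h2 := h1.inv (hden u hu)
    have h3 : (rhoU α) = fun y : ℝ => (Real.exp (α * y) - 1)⁻¹ := by
      funext y; rw [rhoU, one_div]
    rw [h3]
    refine h2.congr_deriv ?_
    have hd := hden u hu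
    simp only [rhoU]
    field_simp
    ring
  -- main case split
  rcases K.eq_empty_or_nonempty with hKe | hne
  · have hfv : f v = 0 := by
      apply image_eq_zero_of_notMem_tsupport
      rw [← hKdef, hKe]
      exact notMem_empty v
    have h1 : ∀ u ∈ Ioi (0:ℝ), CU α u v * QU α f u = 0 := by
      intro u _
      rw [hQ0 u (by rw [hKe]; exact notMem_empty u), mul_zero]
    rw [hfv, setIntegral_congr_fun measurableSet_Ioi h1]
    simp
  · have hKc : IsCompact K := hcs
    set ε := sInf K with hεdef
    have hεK : ε ∈ K := hKc.sInf_mem hne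
    have hεpos : (0:ℝ) < ε := hsupp hεK
    set M := sSup K with hMdef
    have hKsub : K ⊆ Icc ε M := fun x hx =>
      ⟨csInf_le hKc.bddBelow hx, le_csSup hKc.bddAbove hx⟩
    set a := min ε v / 2 with hadef
    have hminpos : 0 < min ε v := lt_min hεpos hv
    have ha0 : (0:ℝ) < a := by rw [hadef]; positivity
    have hamin : a < min ε v := by rw [hadef]; linarith
    have hav : a < v := lt_of_lt_of_le hamin (min_le_right _ _)
    have haε : a < ε := lt_of_lt_of_le hamin (min_le_left _ _)
    set b := max M v + 1 with hbdef
    have hvb : v < b := by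
      have := le_max_right M v; rw [hbdef]; linarith
    have hMb : M < b := by
      have := le_max_left M v; rw [hbdef]; linarith
    have haK : a ∉ K := fun h => absurd (hKsub h).1 (not_le.mpr haε)
    have hbK : b ∉ K := fun h => absurd (hKsub h).2 (not_le.mpr hMb)
    have hab : a ≤ b := le_of_lt (lt_trans hav hvb)
    have hIavsub : Icc a v ⊆ Ioi (0:ℝ) := fun x hx => lt_of_lt_of_le ha0 hx.1
    have hIvbsub : Icc v b ⊆ Ioi (0:ℝ) := fun x hx => lt_of_lt_of_le hv hx.1
    set F : ℝ → ℝ := fun u => CU α u v * QU α f u with hFdef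
    have hF0 : ∀ x ∉ K, F x = 0 := by
      intro x hx
      rw [hFdef]
      simp only
      rw [hQ0 x hx, mul_zero]
    have hstep1 : (∫ u in Ioi (0:ℝ), F u) = ∫ u, F u :=
      setIntegral_eq_integral_of_forall_compl_eq_zero
        (fun x hx => hF0 x (fun hxK => hx (hsupp hxK)))
    have hstep2 : (∫ u in Ioc a b, F u) = ∫ u, F u :=
      setIntegral_eq_integral_of_forall_compl_eq_zero
        (fun x hx => hF0 x (fun hxK => hx
          ⟨lt_of_lt_of_le haε (hKsub hxK).1, le_of_lt (lt_of_le_of_lt (hKsub hxK).2 hMb)⟩))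
    have hstep3 : (∫ u in a..b, F u) = ∫ u in Ioc a b, F u :=
      intervalIntegral.integral_of_le hab
    set F1 : ℝ → ℝ := fun u => 1 / α * rhoU α v * -deriv g u with hF1def
    set F2 : ℝ → ℝ := fun u => 1 / α * rhoU α u * -deriv g u with hF2def
    have hEq1 : EqOn F F1 (Icc a v) := by
      intro u hu
      rw [hFdef, hF1def]
      simp only
      rw [hQg, CU, max_eq_right hu.2]
    have hEq2 : EqOn F F2 (Icc v b) := by
      intro u hu
      rw [hFdef, hF2def]
      simp only
      rw [hQg, CU, max_eq_left hu.1]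
    have hcont1 : ContinuousOn F1 (Icc a v) :=
      continuousOn_const.mul (hgderiv_cont.mono hIavsub).neg
    have hcont2 : ContinuousOn F2 (Icc v b) :=
      (continuousOn_const.mul (hrhocont.mono hIvbsub)).mul
        (hgderiv_cont.mono hIvbsub).neg
    have hi1 : IntervalIntegrable F volume a v := by
      apply ContinuousOn.intervalIntegrable
      rw [uIcc_of_le hav.le]
      exact hcont1.congr hEq1
    have hi2 : IntervalIntegrable F volume v b := by
      apply ContinuousOn.intervalIntegrable
      rw [uIcc_of_le hvb.le]
      exact hcont2.congr hEq2
    have hga : g a = 0 := hg0 a haK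
    have hgb : g b = 0 := hg0 b hbK
    have hfb : f b = 0 := image_eq_zero_of_notMem_tsupport hbK
    have hα' : α ≠ 0 := ne_of_gt hα
    -- first interval
    have hint1 : (∫ u in a..v, F1 u) = 1 / α * rhoU α v * (g a - g v) := by
      have hder : ∀ u ∈ uIcc a v,
          HasDerivAt (fun x => -(1 / α * rhoU α v * g x)) (F1 u) u := by
        intro u hu
        rw [uIcc_of_le hav.le] at hu
        have hu0 : u ∈ Ioi (0:ℝ) := hIavsub hu
        have h1 := ((hgdiff u hu0).hasDerivAt.const_mul (1 / α * rhoU α v)).neg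
        refine h1.congr_deriv ?_
        rw [hF1def]
        ring
      have hInt : IntervalIntegrable F1 volume a v :=
        ContinuousOn.intervalIntegrable (by rw [uIcc_of_le hav.le]; exact hcont1)
      rw [intervalIntegral.integral_eq_sub_of_hasDerivAt hder hInt]
      ring
    -- second interval
    have hint2 : (∫ u in v..b, F2 u) = 1 / α * rhoU α v * g v + f v := by
      have hder : ∀ u ∈ uIcc v b,
          HasDerivAt (fun x => -(1 / α * (rhoU α x * g x)) - f x) (F2 u) u := by
        intro u hu
        rw [uIcc_of_le hvb.le] at hu
        have hu0 : u ∈ Ioi (0:ℝ) := hIvbsub hu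
        have h1 := (((hrho' u hu0).mul (hgdiff u hu0).hasDerivAt).const_mul
          ((1:ℝ) / α)).neg.sub (hf'.differentiableAt.hasDerivAt)
        refine h1.congr_deriv ?_
        have hkey : rhoU α u * (1 + rhoU α u) * g u = deriv f u := by
          rw [hgdef]
          simp only
          field_simp
          exact mul_div_cancel_left₀ _ (hwne u hu0)
        rw [hF2def]
        simp only
        rw [← hkey]
        field_simp
        ring
      have hInt : IntervalIntegrable F2 volume v b :=
        ContinuousOn.intervalIntegrable (by rw [uIcc_of_le hvb.le]; exact hcont2)
      rw [intervalIntegral.integral_eq_sub_of_hasDerivAt hder hInt]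
      rw [hgb, hfb]
      ring
    have hsplit : (∫ u in a..b, F u) = (∫ u in a..v, F u) + ∫ u in v..b, F u :=
      (intervalIntegral.integral_add_adjacent_intervals hi1 hi2).symm
    have hIa : (∫ u in a..v, F u) = ∫ u in a..v, F1 u :=
      intervalIntegral.integral_congr (by rw [uIcc_of_le hav.le]; exact hEq1)
    have hIb : (∫ u in v..b, F u) = ∫ u in v..b, F2 u :=
      intervalIntegral.integral_congr (by rw [uIcc_of_le hvb.le]; exact hEq2)
    calc (∫ u in Ioi (0:ℝ), F u) = ∫ u in a..b, F u := by
          rw [hstep1, ← hstep2, ← hstep3]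
      _ = (∫ u in a..v, F u) + ∫ u in v..b, F u := hsplit
      _ = 1 / α * rhoU α v * (g a - g v) + (1 / α * rhoU α v * g v + f v) := by
          rw [hIa, hIb, hint1, hint2]
      _ = f v := by rw [hga]; ring
end
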